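/- Let ψ₁, ψ₂ : [0,2π] → ℝ be bounded below by m > 0. Then for all θ ∈ [0,2π], |exp((1/2π)∫₀^{2π} P_r(θ−t) log(1/(2πψ₁(t))) dt) − exp((1/2π)∫₀^{2π} P_r(θ−t) log(1/(2πψ₂(t))) dt)| ≤ (1/(2πm²))·‖ψ₁−ψ₂‖_{∞,[0,2π]}, where P_r(s) = (1−r²)/(1+r²−2r cos s) is the Poisson kernel, for any fixed r ∈ [0,1). -/

import Mathlib

/-!
Averaging against `t ↦ P_r(θ - t) / 2π` is a positive linear functional fixing constants, since
`s + 2 arctan (r sin s / (1 - r cos s))` is a primitive of `P_r` and gains exactly `2π` over a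
period. So the two averaged logarithms are at most `log (1 / (2πm))`, and they differ by at most
`N / m` because `log` is `(1/m)`-Lipschitz on `[m, ∞)`. Finally `exp` is `1 / (2πm)`-Lipschitz on
`(-∞, log (1 / (2πm))]`.
-/

open Set Real intervalIntegral MeasureTheory

theorem abs_exp_sub_exp_le_exp_max_mul (a b : ℝ) :
    |exp a - exp b| ≤ exp (max a b) * |a - b| := by
  wlog hba : b ≤ a generalizing a b
  · rw [abs_sub_comm, abs_sub_comm a, max_comm]
    exact this b a (le_of_not_ge hba)
  rw [max_eq_left hba, abs_of_nonneg (sub_nonneg.2 (exp_le_exp.2 hba)),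
    abs_of_nonneg (sub_nonneg.2 hba)]
  have hsplit : exp b = exp a * exp (b - a) := by rw [← exp_add, add_sub_cancel]
  nlinarith [add_one_le_exp (b - a), exp_pos a]

theorem abs_log_sub_log_le {m a b : ℝ} (hm : 0 < m) (ha : m ≤ a) (hb : m ≤ b) :
    |log a - log b| ≤ |a - b| / m := by
  wlog hba : b ≤ a generalizing a b
  · rw [abs_sub_comm, abs_sub_comm a]
    exact this hb ha (le_of_not_ge hba)
  have hb0 : 0 < b := hm.trans_le hb
  rw [abs_of_nonneg (sub_nonneg.2 (log_le_log hb0 hba)), abs_of_nonneg (sub_nonneg.2 hba),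
    ← log_div (hb0.trans_le hba).ne' hb0.ne']
  calc log (a / b) ≤ a / b - 1 := log_le_sub_one_of_pos (div_pos (hb0.trans_le hba) hb0)
    _ = (a - b) / b := by field_simp
    _ ≤ (a - b) / m := div_le_div_of_nonneg_left (sub_nonneg.2 hba) hm hb

theorem log_one_div_mul_le {k m x : ℝ} (hk : 0 < k) (hm : 0 < m) (hx : m ≤ x) :
    log (1 / (k * x)) ≤ log (1 / (k * m)) :=
  log_le_log (by have := hm.trans_le hx; positivity)
    (one_div_le_one_div_of_le (by positivity) (by gcongr))

theorem abs_log_one_div_mul_sub_le {k m x y : ℝ} (hk : 0 < k) (hm : 0 < m) (hx : m ≤ x)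
    (hy : m ≤ y) : |log (1 / (k * x)) - log (1 / (k * y))| ≤ |x - y| / m := by
  rw [one_div, one_div, log_inv, log_inv, neg_sub_neg]
  calc |log (k * y) - log (k * x)| ≤ |k * y - k * x| / (k * m) :=
        abs_log_sub_log_le (mul_pos hk hm) (by gcongr) (by gcongr)
    _ = |x - y| / m := by
        rw [← mul_sub, abs_mul, abs_of_pos hk, abs_sub_comm, mul_div_mul_left _ _ hk.ne']

theorem ContinuousOn.log_one_div_mul {ψ : ℝ → ℝ} {s : Set ℝ} {k : ℝ} (hk : k ≠ 0)
    (hψ : ContinuousOn ψ s) (h0 : ∀ t ∈ s, ψ t ≠ 0) :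
    ContinuousOn (fun t => Real.log (1 / (k * ψ t))) s :=
  (continuousOn_const.div (continuousOn_const.mul hψ) fun t ht => mul_ne_zero hk (h0 t ht)).log
    fun t ht => one_div_ne_zero (mul_ne_zero hk (h0 t ht))

section WeightedIntegral

variable {w f g : ℝ → ℝ} {a b c δ : ℝ}

theorem integral_mul_le_mul_integral_of_le (hab : a ≤ b) (hw : IntervalIntegrable w volume a b)
    (hwf : IntervalIntegrable (fun t => w t * f t) volume a b) (hw0 : ∀ t ∈ Icc a b, 0 ≤ w t)
    (hfc : ∀ t ∈ Icc a b, f t ≤ c) :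
    ∫ t in a..b, w t * f t ≤ c * ∫ t in a..b, w t := by
  calc ∫ t in a..b, w t * f t ≤ ∫ t in a..b, w t * c :=
        integral_mono_on hab hwf (hw.mul_const c)
          fun t ht => mul_le_mul_of_nonneg_left (hfc t ht) (hw0 t ht)
    _ = c * ∫ t in a..b, w t := by rw [intervalIntegral.integral_mul_const, mul_comm]

theorem integral_mul_sub_integral_mul_le (hab : a ≤ b) (hw : IntervalIntegrable w volume a b)
    (hwf : IntervalIntegrable (fun t => w t * f t) volume a b)
    (hwg : IntervalIntegrable (fun t => w t * g t) volume a b) (hw0 : ∀ t ∈ Icc a b, 0 ≤ w t)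
    (hfg : ∀ t ∈ Icc a b, f t - g t ≤ δ) :
    (∫ t in a..b, w t * f t) - ∫ t in a..b, w t * g t ≤ δ * ∫ t in a..b, w t := by
  rw [← integral_sub hwf hwg]
  simp only [← mul_sub]
  exact integral_mul_le_mul_integral_of_le hab hw (by simpa only [mul_sub] using hwf.sub hwg)
    hw0 hfg

theorem abs_integral_mul_sub_integral_mul_le (hab : a ≤ b) (hw : IntervalIntegrable w volume a b)
    (hwf : IntervalIntegrable (fun t => w t * f t) volume a b)
    (hwg : IntervalIntegrable (fun t => w t * g t) volume a b) (hw0 : ∀ t ∈ Icc a b, 0 ≤ w t)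
    (hfg : ∀ t ∈ Icc a b, |f t - g t| ≤ δ) :
    |(∫ t in a..b, w t * f t) - ∫ t in a..b, w t * g t| ≤ δ * ∫ t in a..b, w t :=
  abs_sub_le_iff.2
    ⟨integral_mul_sub_integral_mul_le hab hw hwf hwg hw0 fun t ht => (abs_le.1 (hfg t ht)).2,
      integral_mul_sub_integral_mul_le hab hw hwg hwf hw0 fun t ht => by
        linarith [(abs_le.1 (hfg t ht)).1]⟩

end WeightedIntegral

noncomputable def diskPoissonKernel (r s : ℝ) : ℝ :=
  (1 - r ^ 2) / (1 + r ^ 2 - 2 * r * cos s)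

noncomputable def poissonAverage (r θ : ℝ) (f : ℝ → ℝ) : ℝ :=
  1 / (2 * π) * ∫ t in (0 : ℝ)..2 * π, diskPoissonKernel r (θ - t) * f t

section PoissonKernel

variable {r : ℝ}

theorem mul_cos_le_abs (r s : ℝ) : r * cos s ≤ |r| :=
  (le_abs_self _).trans <| by
    rw [abs_mul]; exact mul_le_of_le_one_right (abs_nonneg r) (abs_cos_le_one s)

theorem one_sub_mul_cos_pos (hr : |r| < 1) (s : ℝ) : 0 < 1 - r * cos s := by
  linarith [mul_cos_le_abs r s]

theorem one_add_sq_sub_two_mul_cos_pos (hr : |r| < 1) (s : ℝ) :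
    0 < 1 + r ^ 2 - 2 * r * cos s := by
  nlinarith [mul_cos_le_abs r s, sq_abs r, abs_nonneg r]

theorem diskPoissonKernel_nonneg (hr : |r| < 1) (s : ℝ) : 0 ≤ diskPoissonKernel r s :=
  div_nonneg (sub_nonneg.2 ((sq_lt_one_iff_abs_lt_one r).2 hr).le)
    (one_add_sq_sub_two_mul_cos_pos hr s).le

theorem continuous_diskPoissonKernel (hr : |r| < 1) : Continuous (diskPoissonKernel r) :=
  continuous_const.div (by fun_prop) fun s => (one_add_sq_sub_two_mul_cos_pos hr s).ne'

theorem hasDerivAt_diskPoissonKernel_primitive (hr : |r| < 1) (s : ℝ) :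
    HasDerivAt (fun s => s + 2 * arctan (r * sin s / (1 - r * cos s)))
      (diskPoissonKernel r s) s := by
  have hc := one_sub_mul_cos_pos hr s
  have hd := one_add_sq_sub_two_mul_cos_pos hr s
  have hnum : HasDerivAt (fun s => r * sin s) (r * cos s) s := (hasDerivAt_sin s).const_mul r
  have hden : HasDerivAt (fun s => 1 - r * cos s) (r * sin s) s := by
    simpa using ((hasDerivAt_cos s).const_mul r).const_sub 1
  refine ((hasDerivAt_id' s).add (((hnum.div hden hc.ne').arctan).const_mul 2)).congr_deriv ?_
  have hsc := sin_sq_add_cos_sq s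
  have hsq : 1 + (r * sin s / (1 - r * cos s)) ^ 2
      = (1 + r ^ 2 - 2 * r * cos s) / (1 - r * cos s) ^ 2 := by
    field_simp
    linear_combination r ^ 2 * hsc
  rw [Pi.div_apply, hsq, diskPoissonKernel]
  field_simp
  linear_combination (-2 * r ^ 2) * hsc

theorem integral_diskPoissonKernel_add_two_pi (hr : |r| < 1) (a : ℝ) :
    ∫ s in a..a + 2 * π, diskPoissonKernel r s = 2 * π := by
  rw [integral_eq_sub_of_hasDerivAt (fun s _ => hasDerivAt_diskPoissonKernel_primitive hr s)
    ((continuous_diskPoissonKernel hr).intervalIntegrable _ _), sin_add_two_pi, cos_add_two_pi]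
  ring

theorem integral_diskPoissonKernel_sub (hr : |r| < 1) (θ : ℝ) :
    ∫ t in (0 : ℝ)..2 * π, diskPoissonKernel r (θ - t) = 2 * π := by
  rw [integral_comp_sub_left (diskPoissonKernel r) θ, sub_zero]
  simpa only [sub_add_cancel] using integral_diskPoissonKernel_add_two_pi hr (θ - 2 * π)

variable {θ c δ : ℝ} {f g : ℝ → ℝ}

theorem continuous_diskPoissonKernel_sub (hr : |r| < 1) (θ : ℝ) :
    Continuous fun t => diskPoissonKernel r (θ - t) :=
  (continuous_diskPoissonKernel hr).comp (continuous_sub_left θ)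

theorem intervalIntegrable_diskPoissonKernel_sub_mul (hr : |r| < 1)
    (hf : IntervalIntegrable f volume 0 (2 * π)) :
    IntervalIntegrable (fun t => diskPoissonKernel r (θ - t) * f t) volume 0 (2 * π) :=
  hf.continuousOn_mul (continuous_diskPoissonKernel_sub hr θ).continuousOn

theorem poissonAverage_le (hr : |r| < 1) (hf : IntervalIntegrable f volume 0 (2 * π))
    (hfc : ∀ t ∈ Icc 0 (2 * π), f t ≤ c) : poissonAverage r θ f ≤ c := by
  have h := integral_mul_le_mul_integral_of_le two_pi_pos.le
    ((continuous_diskPoissonKernel_sub hr θ).intervalIntegrable _ _)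
    (intervalIntegrable_diskPoissonKernel_sub_mul hr hf)
    (fun t _ => diskPoissonKernel_nonneg hr (θ - t)) hfc
  rw [integral_diskPoissonKernel_sub hr] at h
  rw [poissonAverage, one_div, inv_mul_le_iff₀ two_pi_pos]
  linarith

theorem abs_poissonAverage_sub_le (hr : |r| < 1) (hf : IntervalIntegrable f volume 0 (2 * π))
    (hg : IntervalIntegrable g volume 0 (2 * π)) (hfg : ∀ t ∈ Icc 0 (2 * π), |f t - g t| ≤ δ) :
    |poissonAverage r θ f - poissonAverage r θ g| ≤ δ := by
  have h := abs_integral_mul_sub_integral_mul_le two_pi_pos.le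
    ((continuous_diskPoissonKernel_sub hr θ).intervalIntegrable _ _)
    (intervalIntegrable_diskPoissonKernel_sub_mul hr hf)
    (intervalIntegrable_diskPoissonKernel_sub_mul hr hg)
    (fun t _ => diskPoissonKernel_nonneg hr (θ - t)) hfg
  rw [integral_diskPoissonKernel_sub hr] at h
  rw [poissonAverage, poissonAverage, ← mul_sub, abs_mul, abs_of_pos (by positivity), one_div,
    inv_mul_le_iff₀ two_pi_pos]
  linarith

end PoissonKernel

theorem exp_poisson_integral_diff_bound_general
    (ψ₁ ψ₂ : ℝ → ℝ) (m : ℝ) (hm : 0 < m)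
    (hψ₁ : ∀ t ∈ Icc (0:ℝ) (2 * Real.pi), m ≤ ψ₁ t)
    (hψ₂ : ∀ t ∈ Icc (0:ℝ) (2 * Real.pi), m ≤ ψ₂ t)
    (hc₁ : ContinuousOn ψ₁ (Icc 0 (2 * Real.pi)))
    (hc₂ : ContinuousOn ψ₂ (Icc 0 (2 * Real.pi)))
    (N : ℝ) (hN : ∀ t ∈ Icc (0:ℝ) (2 * Real.pi), |ψ₁ t - ψ₂ t| ≤ N)
    (r : ℝ) (hr0 : 0 ≤ r) (hr1 : r < 1) (θ : ℝ) :
    |Real.exp ((1 / (2 * Real.pi)) * ∫ t in (0:ℝ)..(2 * Real.pi),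
          ((1 - r ^ 2) / (1 + r ^ 2 - 2 * r * Real.cos (θ - t))) *
            Real.log (1 / (2 * Real.pi * ψ₁ t))) -
        Real.exp ((1 / (2 * Real.pi)) * ∫ t in (0:ℝ)..(2 * Real.pi),
          ((1 - r ^ 2) / (1 + r ^ 2 - 2 * r * Real.cos (θ - t))) *
            Real.log (1 / (2 * Real.pi * ψ₂ t)))|
      ≤ (1 / (2 * Real.pi * m ^ 2)) * N := by
  have hr : |r| < 1 := abs_lt.2 ⟨by linarith, hr1⟩
  have hint₁ := (hc₁.log_one_div_mul two_pi_pos.ne' fun t ht =>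
    (hm.trans_le (hψ₁ t ht)).ne').intervalIntegrable_of_Icc (μ := volume) two_pi_pos.le
  have hint₂ := (hc₂.log_one_div_mul two_pi_pos.ne' fun t ht =>
    (hm.trans_le (hψ₂ t ht)).ne').intervalIntegrable_of_Icc (μ := volume) two_pi_pos.le
  set A₁ := poissonAverage r θ fun t => log (1 / (2 * π * ψ₁ t))
  set A₂ := poissonAverage r θ fun t => log (1 / (2 * π * ψ₂ t))
  have hA₁ : A₁ ≤ log (1 / (2 * π * m)) := poissonAverage_le hr hint₁
    fun t ht => log_one_div_mul_le two_pi_pos hm (hψ₁ t ht)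
  have hA₂ : A₂ ≤ log (1 / (2 * π * m)) := poissonAverage_le hr hint₂
    fun t ht => log_one_div_mul_le two_pi_pos hm (hψ₂ t ht)
  have hA : |A₁ - A₂| ≤ N / m := abs_poissonAverage_sub_le hr hint₁
    hint₂ fun t ht => (abs_log_one_div_mul_sub_le two_pi_pos hm (hψ₁ t ht)
      (hψ₂ t ht)).trans (div_le_div_of_nonneg_right (hN t ht) hm.le)
  have hexp : exp (max A₁ A₂) ≤ 1 / (2 * π * m) := by
    simpa only [exp_log (by positivity : 0 < 1 / (2 * π * m))]
      using exp_le_exp.2 (max_le hA₁ hA₂)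
  calc |exp A₁ - exp A₂| ≤ exp (max A₁ A₂) * |A₁ - A₂| := abs_exp_sub_exp_le_exp_max_mul A₁ A₂
    _ ≤ 1 / (2 * π * m) * (N / m) := mul_le_mul hexp hA (abs_nonneg _) (by positivity)
    _ = 1 / (2 * π * m ^ 2) * N := by ring

/-- Stability of exponentials of Poisson integrals of `log (1/(2πψ))`. -/
theorem exp_poisson_integral_diff_bound
    (ψ₁ ψ₂ : ℝ → ℝ) (m : ℝ) (hm : 0 < m)
    (hψ₁ : ∀ t ∈ Icc (0:ℝ) (2 * Real.pi), m ≤ ψ₁ t)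
    (hψ₂ : ∀ t ∈ Icc (0:ℝ) (2 * Real.pi), m ≤ ψ₂ t)
    (hc₁ : ContinuousOn ψ₁ (Icc 0 (2 * Real.pi)))
    (hc₂ : ContinuousOn ψ₂ (Icc 0 (2 * Real.pi)))
    (N : ℝ) (hN : ∀ t ∈ Icc (0:ℝ) (2 * Real.pi), |ψ₁ t - ψ₂ t| ≤ N)
    (r : ℝ) (hr0 : 0 ≤ r) (hr1 : r < 1) (θ : ℝ) (hθ : θ ∈ Icc (0:ℝ) (2 * Real.pi)) :
    |Real.exp ((1 / (2 * Real.pi)) * ∫ t in (0:ℝ)..(2 * Real.pi),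
          ((1 - r ^ 2) / (1 + r ^ 2 - 2 * r * Real.cos (θ - t))) *
            Real.log (1 / (2 * Real.pi * ψ₁ t))) -
        Real.exp ((1 / (2 * Real.pi)) * ∫ t in (0:ℝ)..(2 * Real.pi),
          ((1 - r ^ 2) / (1 + r ^ 2 - 2 * r * Real.cos (θ - t))) *
            Real.log (1 / (2 * Real.pi * ψ₂ t)))|
      ≤ (1 / (2 * Real.pi * m ^ 2)) * N :=
  exp_poisson_integral_diff_bound_general ψ₁ ψ₂ m hm hψ₁ hψ₂ hc₁ hc₂ N hN r hr0 hr1 θ
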